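/- Let C be a local identifying code in the square grid and let c ∈ C be a codeword with I(c) = {c}. Then every neighbor of c is covered by at least two codewords, and hence s(c) ≤ 3. -/

import Mathlib

open SimpleGraph

/-- The closed neighbourhood of a vertex. -/
def cnbr {V : Type*} (G : SimpleGraph V) (u : V) : Set V := insert u (G.neighborSet u)

/-- The `I`-set of a vertex with respect to a code `C`. -/
def iset {V : Type*} (G : SimpleGraph V) (C : Set V) (u : V) : Set V := cnbr G u ∩ C

/-- `C` is a dominating set (covering code). -/
def IsDominating {V : Type*} (G : SimpleGraph V) (C : Set V) : Prop :=
  ∀ u, (iset G C u).Nonempty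

/-- `C` is a local identifying code. -/
def IsLocalID {V : Type*} (G : SimpleGraph V) (C : Set V) : Prop :=
  IsDominating G C ∧ ∀ u v, G.Adj u v → iset G C u ≠ iset G C v

/-- `C` is a local locating-dominating code. -/
def IsLocalLD {V : Type*} (G : SimpleGraph V) (C : Set V) : Prop :=
  IsDominating G C ∧ ∀ u v, G.Adj u v → u ∉ C → v ∉ C → iset G C u ≠ iset G C v

/-- `C` is an identifying code. -/
def IsID {V : Type*} (G : SimpleGraph V) (C : Set V) : Prop :=
  IsDominating G C ∧ ∀ u v : V, u ≠ v → iset G C u ≠ iset G C v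

/-- `C` is a locating-dominating code. -/
def IsLD {V : Type*} (G : SimpleGraph V) (C : Set V) : Prop :=
  IsDominating G C ∧ ∀ u v : V, u ≠ v → u ∉ C → v ∉ C → iset G C u ≠ iset G C v

/-- The share of a codeword `c`. -/
noncomputable def share {V : Type*} (G : SimpleGraph V) (C : Set V) (c : V) : ℝ :=
  ∑ᶠ u ∈ cnbr G c, (1 : ℝ) / (iset G C u).ncard

/-- The square grid. -/
def squareGrid : SimpleGraph (ℤ × ℤ) where
  Adj u v := u - v = (1, 0) ∨ u - v = (-1, 0) ∨ u - v = (0, 1) ∨ u - v = (0, -1)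
  symm := by
    constructor
    intro u v h
    have hvu : v - u = -(u - v) := by ring
    rcases h with h | h | h | h <;> rw [hvu, h] <;> simp [Prod.ext_iff]
  loopless := by
    constructor
    intro u h
    simp [Prod.ext_iff, sub_self] at h

/-!
The codeword `c` lies in `I(u)` for every neighbour `u`, and local identification forbids
`I(u) = I(c) = {c}`, so `I(u)` contains a second codeword. Hence `c` contributes `1` to its share
and each of its four neighbours at most `1/2`.
-/

section LocalIdentifyingCode

variable {V : Type*} {G : SimpleGraph V} {C : Set V}

lemma mem_iset_of_adj {c u : V} (hc : c ∈ C) (hadj : G.Adj c u) : c ∈ iset G C u :=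
  ⟨Set.mem_insert_of_mem _ hadj.symm, hc⟩

lemma IsLocalID.two_le_ncard_iset_of_adj (hC : IsLocalID G C) {c u : V}
    (hI : iset G C c = {c}) (hadj : G.Adj c u) (hfin : (iset G C u).Finite) :
    2 ≤ (iset G C u).ncard := by
  have hcu : c ∈ iset G C u := mem_iset_of_adj (hI.symm.subset rfl).2 hadj
  obtain ⟨x, hx, hxc⟩ : ∃ x ∈ iset G C u, x ≠ c := by
    by_contra! h
    exact hC.2 c u hadj (hI.trans (Set.eq_singleton_iff_unique_mem.mpr ⟨hcu, h⟩).symm)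
  exact (Set.one_lt_ncard_iff hfin).mpr ⟨x, c, hx, hcu, hxc⟩

lemma share_le_of_iset_eq_singleton {c : V} (hI : iset G C c = {c})
    (hfin : (G.neighborSet c).Finite) (h2 : ∀ u, G.Adj c u → 2 ≤ (iset G C u).ncard) :
    share G C c ≤ 1 + (G.neighborSet c).ncard / 2 := by
  have hnbr : ∑ᶠ u ∈ G.neighborSet c, (1 : ℝ) / (iset G C u).ncard
      ≤ (G.neighborSet c).ncard / 2 := by
    rw [finsum_mem_eq_finite_toFinset_sum _ hfin, Set.ncard_eq_toFinset_card _ hfin,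
      div_eq_mul_one_div, ← nsmul_eq_mul]
    refine Finset.sum_le_card_nsmul _ _ _ fun u hu ↦ ?_
    have h2u : (2 : ℝ) ≤ (iset G C u).ncard := by exact_mod_cast h2 u (hfin.mem_toFinset.mp hu)
    exact one_div_le_one_div_of_le two_pos h2u
  rw [share, cnbr, finsum_mem_insert _ G.notMem_neighborSet_self hfin, hI, Set.ncard_singleton]
  simpa using hnbr

end LocalIdentifyingCode

section SquareGrid

def unitVectors : Finset (ℤ × ℤ) := {(1, 0), (-1, 0), (0, 1), (0, -1)}

lemma squareGrid_neighborSet (c : ℤ × ℤ) :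
    squareGrid.neighborSet c = (c - ·) '' (unitVectors : Set (ℤ × ℤ)) := by
  ext u
  constructor
  · intro h
    exact ⟨c - u, by simpa [squareGrid, unitVectors] using h, sub_sub_cancel c u⟩
  · rintro ⟨d, hd, rfl⟩
    simpa [squareGrid, unitVectors] using hd

lemma squareGrid_neighborSet_finite (c : ℤ × ℤ) : (squareGrid.neighborSet c).Finite := by
  rw [squareGrid_neighborSet]
  exact (Finset.finite_toSet _).image _

lemma squareGrid_neighborSet_ncard (c : ℤ × ℤ) : (squareGrid.neighborSet c).ncard = 4 := by
  rw [squareGrid_neighborSet, Set.ncard_image_of_injective _ sub_right_injective,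
    Set.ncard_coe_finset]
  rfl

lemma squareGrid_iset_finite (C : Set (ℤ × ℤ)) (u : ℤ × ℤ) : (iset squareGrid C u).Finite :=
  ((squareGrid_neighborSet_finite u).insert u).subset Set.inter_subset_left

end SquareGrid

theorem stmt18_general (C : Set (ℤ × ℤ)) (hC : IsLocalID squareGrid C) (c : ℤ × ℤ)
    (hI : iset squareGrid C c = {c}) :
    (∀ u, squareGrid.Adj c u → 2 ≤ (iset squareGrid C u).ncard) ∧
      share squareGrid C c ≤ 3 := by
  have h2 : ∀ u, squareGrid.Adj c u → 2 ≤ (iset squareGrid C u).ncard := fun u hadj ↦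
    hC.two_le_ncard_iset_of_adj hI hadj (squareGrid_iset_finite C u)
  refine ⟨h2, ?_⟩
  calc share squareGrid C c ≤ 1 + (squareGrid.neighborSet c).ncard / 2 :=
        share_le_of_iset_eq_singleton hI (squareGrid_neighborSet_finite c) h2
    _ = 3 := by rw [squareGrid_neighborSet_ncard]; norm_num

/-- In the square grid, if `c` is a codeword of a local identifying code with
`I(c) = {c}`, then each neighbour of `c` is covered by at least two codewords and
`s(c) ≤ 3`. -/
theorem stmt18 (C : Set (ℤ × ℤ)) (hC : IsLocalID squareGrid C) (c : ℤ × ℤ) (hc : c ∈ C)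
    (hI : iset squareGrid C c = {c}) :
    (∀ u, squareGrid.Adj c u → 2 ≤ (iset squareGrid C u).ncard) ∧
      share squareGrid C c ≤ 3 :=
  stmt18_general C hC c hI
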